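/- Let f be the decision rule of a soft regression forest with T trees on ℝ^{d_x}, let W_max be an upper bound on the Euclidean norms ‖w_{i,t}‖ of all internal-node weight vectors, let Π_max be an upper bound on the Euclidean norms ‖π_{l,t}‖ of all leaf decision vectors, and let D_max ≥ 1 be such that every root-to-leaf path in every tree contains at most D_max − 1 internal nodes. Then f is Lipschitz smooth with constant S = W_max² · Π_max · (D_max − 1)(D_max − 3/4); that is, f is continuously differentiable and its Jacobian satisfies ‖J_f(x₁) − J_f(x₂)‖ ≤ W_max² Π_max (D_max − 1)(D_max − 3/4) · ‖x₁ − x₂‖ for all x₁, x₂ ∈ ℝ^{d_x}. -/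

import Mathlib

open scoped BigOperators

/-- The sigmoid function `S(z) = 1/(1+e^{-z})`. -/
noncomputable def sigmoid (z : ℝ) : ℝ := 1 / (1 + Real.exp (-z))

/-- Route probability of the leaf indexed by `l : Fin D → Bool` in a full binary soft
regression tree of depth `D` on `ℝ^{d_x}`.  Internal nodes are indexed by the boolean
prefix (of length `< D`) describing the root-to-node path; `l k = true` means the path
to leaf `l` goes left at level `k` (factor `S(wᵀx + b)`), `l k = false` means it goes
right (factor `1 - S(wᵀx + b)`). -/
noncomputable def routeProb (dx D : ℕ)
    (w : List Bool → EuclideanSpace ℝ (Fin dx)) (b : List Bool → ℝ)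
    (l : Fin D → Bool) (x : EuclideanSpace ℝ (Fin dx)) : ℝ :=
  ∏ k : Fin D,
    if l k then
      sigmoid ((inner ℝ (w ((List.ofFn l).take (k : ℕ))) x : ℝ) + b ((List.ofFn l).take (k : ℕ)))
    else
      1 - sigmoid ((inner ℝ (w ((List.ofFn l).take (k : ℕ))) x : ℝ) + b ((List.ofFn l).take (k : ℕ)))


/-- The decision rule of a soft regression forest with `T` trees: tree `t` has depth
`Dt t`, internal-node weights `w t`, biases `b t`, and leaf decision vectors
`leaf t l ∈ ℝ^{d_z}`; the output is `f(x) = (1/T) Σ_t Σ_l p_{l,t}(x) · π_{l,t}`. -/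
noncomputable def srf (dx dz T : ℕ) (Dt : Fin T → ℕ)
    (w : Fin T → List Bool → EuclideanSpace ℝ (Fin dx))
    (b : Fin T → List Bool → ℝ)
    (leaf : (t : Fin T) → (Fin (Dt t) → Bool) → EuclideanSpace ℝ (Fin dz))
    (x : EuclideanSpace ℝ (Fin dx)) : EuclideanSpace ℝ (Fin dz) :=
  (T : ℝ)⁻¹ • ∑ t, ∑ l : Fin (Dt t) → Bool, routeProb dx (Dt t) (w t) (b t) l x • leaf t l

/-!
A tree of depth `D + 1` is the gate `σ(⟪w, x⟫ + b) • F₁ + (1 - σ(⟪w, x⟫ + b)) • F₀` of its two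
subtrees `F₁`, `F₀`. Since `σ' = σ (1 - σ)` takes values in `[0, 1/4]` and is itself
`1/4`-Lipschitz, such a gate keeps the sup bound `Π` of the subtrees, turns a bound `a` on their
Jacobians into `a + WΠ/2` and a Lipschitz constant `c` of their Jacobians into
`c + W a + W²Π/2`. By induction on the depth, the Jacobian of a tree of depth `D` is
`D (D + 1)/4 · W²Π`-Lipschitz, and `D (D + 1)/4 ≤ (D_max - 1)(D_max - 3/4)` for `D < D_max`.
Averaging over the trees preserves these bounds.
-/

open Set

namespace Real

lemma sigmoid_mul_one_sub_nonneg (x : ℝ) : 0 ≤ sigmoid x * (1 - sigmoid x) :=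
  mul_nonneg (sigmoid_nonneg x) (sub_nonneg.2 (sigmoid_le_one x))

lemma sigmoid_mul_one_sub_le (x : ℝ) : sigmoid x * (1 - sigmoid x) ≤ 4⁻¹ := by
  nlinarith [sq_nonneg (sigmoid x - 2⁻¹)]

lemma abs_sigmoid_sub_le (x y : ℝ) : |sigmoid x - sigmoid y| ≤ 4⁻¹ * |x - y| := by
  have hderiv (z : ℝ) : ‖deriv sigmoid z‖ ≤ 4⁻¹ := by
    rw [deriv_sigmoid, Real.norm_of_nonneg (sigmoid_mul_one_sub_nonneg z)]
    exact sigmoid_mul_one_sub_le z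
  simpa only [Real.norm_eq_abs] using Convex.norm_image_sub_le_of_norm_deriv_le
    (fun _ _ => differentiableAt_sigmoid) (fun z _ => hderiv z) convex_univ (mem_univ y)
    (mem_univ x)

lemma abs_sigmoid_mul_one_sub_sub_le (x y : ℝ) :
    |sigmoid x * (1 - sigmoid x) - sigmoid y * (1 - sigmoid y)| ≤ 4⁻¹ * |x - y| := by
  have hfactor : sigmoid x * (1 - sigmoid x) - sigmoid y * (1 - sigmoid y)
      = (sigmoid x - sigmoid y) * (1 - sigmoid x - sigmoid y) := by ring
  have hsecond : |1 - sigmoid x - sigmoid y| ≤ 1 := by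
    rw [abs_le]
    constructor <;> linarith [sigmoid_pos x, sigmoid_pos y, sigmoid_lt_one x, sigmoid_lt_one y]
  rw [hfactor, abs_mul]
  calc |sigmoid x - sigmoid y| * |1 - sigmoid x - sigmoid y| ≤ |sigmoid x - sigmoid y| :=
        mul_le_of_le_one_right (abs_nonneg _) hsecond
    _ ≤ 4⁻¹ * |x - y| := abs_sigmoid_sub_le x y

end Real

lemma sigmoid_eq_real_sigmoid : sigmoid = Real.sigmoid :=
  funext fun _ => one_div _

lemma sigmoid_mem_Icc (z : ℝ) : sigmoid z ∈ Icc 0 1 := by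
  rw [sigmoid_eq_real_sigmoid]
  exact ⟨Real.sigmoid_nonneg z, Real.sigmoid_le_one z⟩

section

variable {E F : Type*} [NormedAddCommGroup E] [NormedSpace ℝ E]
  [NormedAddCommGroup F] [NormedSpace ℝ F]

structure SmoothBounds (f : E → F) (P a c : ℝ) : Prop where
  differentiable : Differentiable ℝ f
  norm_le : ∀ x, ‖f x‖ ≤ P
  norm_fderiv_le : ∀ x, ‖fderiv ℝ f x‖ ≤ a
  norm_fderiv_sub_le : ∀ x y, ‖fderiv ℝ f x - fderiv ℝ f y‖ ≤ c * ‖x - y‖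

lemma smoothBounds_const {v : F} {P : ℝ} (hv : ‖v‖ ≤ P) :
    SmoothBounds (fun _ : E => v) P 0 0 where
  differentiable := differentiable_const v
  norm_le _ := hv
  norm_fderiv_le _ := by simp
  norm_fderiv_sub_le _ _ := by simp

lemma norm_smul_add_one_sub_smul_le {t B : ℝ} (ht : t ∈ Icc 0 1) {u v : F}
    (hu : ‖u‖ ≤ B) (hv : ‖v‖ ≤ B) : ‖t • u + (1 - t) • v‖ ≤ B := by
  simpa using convex_closedBall (0 : F) B (mem_closedBall_zero_iff.2 hu)
    (mem_closedBall_zero_iff.2 hv) ht.1 (sub_nonneg.2 ht.2) (add_sub_cancel t 1)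

lemma norm_average_le {ι : Type*} [Fintype ι] {v : ι → F} {B : ℝ} (hB : 0 ≤ B)
    (hv : ∀ i, ‖v i‖ ≤ B) : ‖(Fintype.card ι : ℝ)⁻¹ • ∑ i, v i‖ ≤ B := by
  rcases isEmpty_or_nonempty ι with hι | hι
  · simpa using hB
  have hcard : (0 : ℝ) < Fintype.card ι := by exact_mod_cast Fintype.card_pos
  calc ‖(Fintype.card ι : ℝ)⁻¹ • ∑ i, v i‖ ≤ (Fintype.card ι : ℝ)⁻¹ * ∑ _i : ι, B := by
        rw [norm_smul, Real.norm_of_nonneg (inv_nonneg.2 hcard.le)]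
        gcongr
        exact (norm_sum_le _ _).trans (Finset.sum_le_sum fun i _ => hv i)
    _ = B := by
        rw [Finset.sum_const, Finset.card_univ, nsmul_eq_mul, inv_mul_cancel_left₀ hcard.ne']

lemma hasFDerivAt_gate {h : E → ℝ} {g k : E → F} (hh : Differentiable ℝ h) (hg : Differentiable ℝ g)
    (hk : Differentiable ℝ k) (x : E) :
    HasFDerivAt (fun x => h x • g x + (1 - h x) • k x)
      (h x • fderiv ℝ g x + (1 - h x) • fderiv ℝ k x + (fderiv ℝ h x).smulRight (g x - k x))
      x := by
  refine (((hh x).hasFDerivAt.smul (hg x).hasFDerivAt).add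
    (((hasFDerivAt_const 1 x).sub (hh x).hasFDerivAt).smul (hk x).hasFDerivAt)).congr_fderiv ?_
  ext ξ
  simp only [Pi.sub_apply, zero_sub, add_apply, smul_apply, ContinuousLinearMap.smulRight_apply,
    neg_apply, neg_smul]
  module

namespace SmoothBounds

variable {f g k : E → F} {h : E → ℝ} {P a c α β : ℝ}

protected lemma norm_sub_le (hf : SmoothBounds f P a c) (x y : E) : ‖f x - f y‖ ≤ a * ‖x - y‖ :=
  Convex.norm_image_sub_le_of_norm_fderiv_le (fun z _ => hf.differentiable z)
    (fun z _ => hf.norm_fderiv_le z) convex_univ (mem_univ y) (mem_univ x)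

lemma mono (hf : SmoothBounds f P a c) {P' a' c' : ℝ} (hP : P ≤ P') (ha : a ≤ a') (hc : c ≤ c') :
    SmoothBounds f P' a' c' where
  differentiable := hf.differentiable
  norm_le x := (hf.norm_le x).trans hP
  norm_fderiv_le x := (hf.norm_fderiv_le x).trans ha
  norm_fderiv_sub_le x y :=
    (hf.norm_fderiv_sub_le x y).trans (mul_le_mul_of_nonneg_right hc (norm_nonneg _))

lemma contDiff_one (hf : SmoothBounds f P a c) : ContDiff ℝ 1 f := by
  refine contDiff_one_iff_fderiv.2 ⟨hf.differentiable, ?_⟩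
  refine (LipschitzWith.of_dist_le_mul fun x y => ?_).continuous (K := c.toNNReal)
  rw [dist_eq_norm, dist_eq_norm]
  exact (hf.norm_fderiv_sub_le x y).trans
    (mul_le_mul_of_nonneg_right (Real.le_coe_toNNReal c) (norm_nonneg _))

lemma average {ι : Type*} [Fintype ι] {f : ι → E → F} (hf : ∀ i, SmoothBounds (f i) P a c)
    (hP : 0 ≤ P) (ha : 0 ≤ a) (hc : 0 ≤ c) :
    SmoothBounds (fun x => (Fintype.card ι : ℝ)⁻¹ • ∑ i, f i x) P a c := by
  have hderiv (x : E) : HasFDerivAt (fun x => (Fintype.card ι : ℝ)⁻¹ • ∑ i, f i x)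
      ((Fintype.card ι : ℝ)⁻¹ • ∑ i, fderiv ℝ (f i) x) x :=
    (HasFDerivAt.fun_sum fun i _ => ((hf i).differentiable x).hasFDerivAt).const_smul _
  refine ⟨fun x => (hderiv x).differentiableAt, fun x => norm_average_le hP fun i => ?_,
    fun x => ?_, fun x y => ?_⟩
  · exact (hf i).norm_le x
  · rw [(hderiv x).fderiv]
    exact norm_average_le ha fun i => (hf i).norm_fderiv_le x
  · rw [(hderiv x).fderiv, (hderiv y).fderiv, ← smul_sub, ← Finset.sum_sub_distrib]
    exact norm_average_le (by positivity) fun i => (hf i).norm_fderiv_sub_le x y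

lemma norm_fderiv_gate_sub_le (hh : SmoothBounds h 1 α β) (hh01 : ∀ x, h x ∈ Icc 0 1)
    (hg : SmoothBounds g P a c) (hk : SmoothBounds k P a c) (x y : E) :
    ‖(h x • fderiv ℝ g x + (1 - h x) • fderiv ℝ k x + (fderiv ℝ h x).smulRight (g x - k x)) -
      (h y • fderiv ℝ g y + (1 - h y) • fderiv ℝ k y + (fderiv ℝ h y).smulRight (g y - k y))‖
      ≤ (c + 4 * α * a + 2 * β * P) * ‖x - y‖ := by
  set d := ‖x - y‖
  have hα : 0 ≤ α := (norm_nonneg _).trans (hh.norm_fderiv_le x)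
  have hsplit :
      (h x • fderiv ℝ g x + (1 - h x) • fderiv ℝ k x + (fderiv ℝ h x).smulRight (g x - k x)) -
        (h y • fderiv ℝ g y + (1 - h y) • fderiv ℝ k y + (fderiv ℝ h y).smulRight (g y - k y))
      = (h x • (fderiv ℝ g x - fderiv ℝ g y) + (1 - h x) • (fderiv ℝ k x - fderiv ℝ k y))
        + (h x - h y) • (fderiv ℝ g y - fderiv ℝ k y)
        + (fderiv ℝ h x - fderiv ℝ h y).smulRight (g x - k x)
        + (fderiv ℝ h y).smulRight ((g x - g y) - (k x - k y)) := by
    ext ξ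
    simp only [add_apply, sub_apply, smul_apply, ContinuousLinearMap.smulRight_apply]
    module
  have hconvex : ‖h x • (fderiv ℝ g x - fderiv ℝ g y) + (1 - h x) • (fderiv ℝ k x - fderiv ℝ k y)‖
      ≤ c * d :=
    norm_smul_add_one_sub_smul_le (hh01 x) (hg.norm_fderiv_sub_le x y) (hk.norm_fderiv_sub_le x y)
  have hgate : ‖(h x - h y) • (fderiv ℝ g y - fderiv ℝ k y)‖ ≤ α * d * (2 * a) := by
    rw [norm_smul, Real.norm_eq_abs]
    exact mul_le_mul (hh.norm_sub_le x y) (norm_sub_le_of_le (hg.norm_fderiv_le y)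
      (hk.norm_fderiv_le y) |>.trans_eq (two_mul a).symm) (norm_nonneg _) (by positivity)
  have hgate_deriv : ‖(fderiv ℝ h x - fderiv ℝ h y).smulRight (g x - k x)‖ ≤ β * d * (2 * P) := by
    rw [ContinuousLinearMap.norm_smulRight_apply]
    exact mul_le_mul (hh.norm_fderiv_sub_le x y) (norm_sub_le_of_le (hg.norm_le x)
      (hk.norm_le x) |>.trans_eq (two_mul P).symm) (norm_nonneg _)
      ((norm_nonneg _).trans (hh.norm_fderiv_sub_le x y))
  have hvalues : ‖(fderiv ℝ h y).smulRight ((g x - g y) - (k x - k y))‖ ≤ α * (2 * a * d) := by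
    rw [ContinuousLinearMap.norm_smulRight_apply]
    exact mul_le_mul (hh.norm_fderiv_le y) (norm_sub_le_of_le (hg.norm_sub_le x y)
      (hk.norm_sub_le x y) |>.trans_eq (by ring)) (norm_nonneg _) hα
  rw [hsplit]
  calc _ ≤ _ := norm_add₄_le
    _ ≤ c * d + α * d * (2 * a) + β * d * (2 * P) + α * (2 * a * d) := by gcongr
    _ = (c + 4 * α * a + 2 * β * P) * d := by ring

lemma gate (hh : SmoothBounds h 1 α β) (hh01 : ∀ x, h x ∈ Icc 0 1)
    (hg : SmoothBounds g P a c) (hk : SmoothBounds k P a c) :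
    SmoothBounds (fun x => h x • g x + (1 - h x) • k x) P (a + 2 * α * P)
      (c + 4 * α * a + 2 * β * P) := by
  have hderiv := hasFDerivAt_gate hh.differentiable hg.differentiable hk.differentiable
  refine ⟨fun x => (hderiv x).differentiableAt,
    fun x => norm_smul_add_one_sub_smul_le (hh01 x) (hg.norm_le x) (hk.norm_le x),
    fun x => ?_, fun x y => ?_⟩
  · have hα : 0 ≤ α := (norm_nonneg _).trans (hh.norm_fderiv_le x)
    rw [(hderiv x).fderiv]
    calc _ ≤ ‖h x • fderiv ℝ g x + (1 - h x) • fderiv ℝ k x‖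
          + ‖(fderiv ℝ h x).smulRight (g x - k x)‖ := norm_add_le _ _
      _ ≤ a + α * (P + P) := by
          rw [ContinuousLinearMap.norm_smulRight_apply]
          gcongr
          · exact norm_smul_add_one_sub_smul_le (hh01 x) (hg.norm_fderiv_le x)
              (hk.norm_fderiv_le x)
          · exact hh.norm_fderiv_le x
          · exact norm_sub_le_of_le (hg.norm_le x) (hk.norm_le x)
      _ = a + 2 * α * P := by ring
  · rw [(hderiv x).fderiv, (hderiv y).fderiv]
    exact norm_fderiv_gate_sub_le hh hh01 hg hk x y

end SmoothBounds

end

section SigmoidGate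

variable {H : Type*} [NormedAddCommGroup H] [InnerProductSpace ℝ H]

lemma smoothBounds_sigmoid_inner (v : H) (β : ℝ) :
    SmoothBounds (fun x => sigmoid (inner ℝ v x + β)) 1 (‖v‖ / 4) (‖v‖ ^ 2 / 4) := by
  rw [sigmoid_eq_real_sigmoid]
  set u : H → ℝ := fun x => inner ℝ v x + β
  have hderiv (x : H) : HasFDerivAt (fun x => Real.sigmoid (u x))
      ((Real.sigmoid (u x) * (1 - Real.sigmoid (u x))) • innerSL ℝ v) x :=
    (Real.hasDerivAt_sigmoid _).comp_hasFDerivAt x ((innerSL ℝ v).hasFDerivAt.add_const β)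
  have hu (x y : H) : |u x - u y| ≤ ‖v‖ * ‖x - y‖ := by
    simpa only [u, add_sub_add_right_eq_sub, ← inner_sub_right] using
      abs_real_inner_le_norm v (x - y)
  refine ⟨fun x => (hderiv x).differentiableAt, fun x => ?_, fun x => ?_, fun x y => ?_⟩
  · rw [Real.norm_of_nonneg (Real.sigmoid_nonneg _)]
    exact Real.sigmoid_le_one _
  · rw [(hderiv x).fderiv, norm_smul, innerSL_apply_norm,
      Real.norm_of_nonneg (Real.sigmoid_mul_one_sub_nonneg _)]
    linarith [mul_le_mul_of_nonneg_right (Real.sigmoid_mul_one_sub_le (u x)) (norm_nonneg v)]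
  · rw [(hderiv x).fderiv, (hderiv y).fderiv, ← sub_smul, norm_smul, innerSL_apply_norm,
      Real.norm_eq_abs]
    calc _ ≤ 4⁻¹ * (‖v‖ * ‖x - y‖) * ‖v‖ := by
          gcongr
          exact (Real.abs_sigmoid_mul_one_sub_sub_le _ _).trans (by gcongr; exact hu x y)
      _ = ‖v‖ ^ 2 / 4 * ‖x - y‖ := by ring

end SigmoidGate

section Tree

variable {F : Type*} [NormedAddCommGroup F] [NormedSpace ℝ F] {dx : ℕ}

noncomputable def treeOutput {D : ℕ} (w : List Bool → EuclideanSpace ℝ (Fin dx))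
    (b : List Bool → ℝ) (leaf : (Fin D → Bool) → F) (x : EuclideanSpace ℝ (Fin dx)) : F :=
  ∑ l, routeProb dx D w b l x • leaf l

lemma treeOutput_zero (w : List Bool → EuclideanSpace ℝ (Fin dx)) (b : List Bool → ℝ)
    (leaf : (Fin 0 → Bool) → F) : treeOutput w b leaf = fun _ => leaf default := by
  ext x
  simp only [treeOutput, Fintype.sum_unique, routeProb, Finset.univ_eq_empty, Finset.prod_empty,
    one_smul]
  exact congrArg leaf (Subsingleton.elim _ _)

lemma routeProb_cons {D : ℕ} (w : List Bool → EuclideanSpace ℝ (Fin dx)) (b : List Bool → ℝ)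
    (c : Bool) (l : Fin D → Bool) (x : EuclideanSpace ℝ (Fin dx)) :
    routeProb dx (D + 1) w b (Fin.cons c l) x =
      (if c then sigmoid (inner ℝ (w []) x + b []) else 1 - sigmoid (inner ℝ (w []) x + b [])) *
        routeProb dx D (w ∘ List.cons c) (b ∘ List.cons c) l x := by
  rw [routeProb, routeProb, Fin.prod_univ_succ]
  congr 1
  refine Finset.prod_congr rfl fun k _ => ?_
  simp [List.take_succ_cons]

lemma treeOutput_succ {D : ℕ} (w : List Bool → EuclideanSpace ℝ (Fin dx)) (b : List Bool → ℝ)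
    (leaf : (Fin (D + 1) → Bool) → F) (x : EuclideanSpace ℝ (Fin dx)) :
    treeOutput w b leaf x =
      sigmoid (inner ℝ (w []) x + b []) •
          treeOutput (w ∘ List.cons true) (b ∘ List.cons true) (fun l => leaf (Fin.cons true l)) x
        + (1 - sigmoid (inner ℝ (w []) x + b [])) •
          treeOutput (w ∘ List.cons false) (b ∘ List.cons false)
            (fun l => leaf (Fin.cons false l)) x := by
  rw [treeOutput, ← (Fin.consEquiv fun _ => Bool).sum_comp, Fintype.sum_prod_type,
    Fintype.sum_bool, treeOutput, treeOutput, Finset.smul_sum, Finset.smul_sum]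
  simp only [Fin.consEquiv, Equiv.coe_fn_mk, routeProb_cons, ↓reduceIte, Bool.false_eq_true,
    smul_smul]

lemma smoothBounds_treeOutput {W P : ℝ} {D : ℕ} (w : List Bool → EuclideanSpace ℝ (Fin dx))
    (b : List Bool → ℝ) (leaf : (Fin D → Bool) → F)
    (hw : ∀ pre : List Bool, pre.length < D → ‖w pre‖ ≤ W) (hleaf : ∀ l, ‖leaf l‖ ≤ P) :
    SmoothBounds (treeOutput w b leaf) P (D * (W * P / 2)) (D * (D + 1) / 4 * (W ^ 2 * P)) := by
  induction D generalizing w b with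
  | zero =>
    rw [treeOutput_zero]
    simpa using smoothBounds_const (hleaf default)
  | succ D ih =>
    have hroot_le : ‖w []‖ ≤ W := hw [] (Nat.succ_pos D)
    have hroot :
        SmoothBounds (fun x => sigmoid (inner ℝ (w []) x + b [])) 1 (W / 4) (W ^ 2 / 4) :=
      (smoothBounds_sigmoid_inner (w []) (b [])).mono le_rfl (by gcongr) (by gcongr)
    have hsubtree (c : Bool) := ih (w ∘ List.cons c) (b ∘ List.cons c)
      (fun l => leaf (Fin.cons c l)) (fun pre hpre => hw _ (by simpa using hpre)) (fun l => hleaf _)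
    rw [funext (treeOutput_succ w b leaf)]
    exact (hroot.gate (fun x => sigmoid_mem_Icc _) (hsubtree true) (hsubtree false)).mono le_rfl
      (by push_cast; linarith) (by push_cast; linarith)

end Tree

lemma depth_factor_le {D Dmax : ℕ} (hD : D ≤ Dmax - 1) (hDmax : 1 ≤ Dmax) :
    (D : ℝ) * (D + 1) / 4 ≤ ((Dmax : ℝ) - 1) * ((Dmax : ℝ) - 3 / 4) := by
  have hD' : (D : ℝ) + 1 ≤ Dmax := by exact_mod_cast (by omega : D + 1 ≤ Dmax)
  have hDmax' : (1 : ℝ) ≤ Dmax := by exact_mod_cast hDmax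
  nlinarith [mul_le_mul hD' hD' (by positivity) (by positivity)]

/-- The SRF decision rule is Lipschitz smooth with constant
`W_max² · Π_max · (D_max − 1)(D_max − 3/4)`: it is continuously differentiable and
its Jacobian (Fréchet derivative) is Lipschitz with that constant, where `W_max`
bounds the norms of all internal-node weight vectors, `Π_max` bounds the norms of all
leaf decision vectors, and every root-to-leaf path in every tree contains at most
`D_max − 1` internal nodes. -/
theorem srf_lipschitz_smooth (dx dz T : ℕ) (Dt : Fin T → ℕ)
    (w : Fin T → List Bool → EuclideanSpace ℝ (Fin dx))
    (b : Fin T → List Bool → ℝ)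
    (leaf : (t : Fin T) → (Fin (Dt t) → Bool) → EuclideanSpace ℝ (Fin dz))
    (Wmax Pimax : ℝ) (hWmax0 : 0 ≤ Wmax) (hPimax0 : 0 ≤ Pimax)
    (Dmax : ℕ) (hDmax : 1 ≤ Dmax)
    (hW : ∀ t (pre : List Bool), pre.length < Dt t → ‖w t pre‖ ≤ Wmax)
    (hPi : ∀ t l, ‖leaf t l‖ ≤ Pimax)
    (hdepth : ∀ t, Dt t ≤ Dmax - 1) :
    ContDiff ℝ 1 (srf dx dz T Dt w b leaf) ∧
      ∀ x₁ x₂ : EuclideanSpace ℝ (Fin dx),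
        ‖fderiv ℝ (srf dx dz T Dt w b leaf) x₁ - fderiv ℝ (srf dx dz T Dt w b leaf) x₂‖ ≤
          Wmax ^ 2 * Pimax * ((Dmax : ℝ) - 1) * ((Dmax : ℝ) - 3 / 4) * ‖x₁ - x₂‖ := by
  set A : ℝ := ((Dmax - 1 : ℕ) : ℝ) * (Wmax * Pimax / 2) with hA
  set C : ℝ := Wmax ^ 2 * Pimax * ((Dmax : ℝ) - 1) * ((Dmax : ℝ) - 3 / 4) with hC_def
  have hC (D : ℕ) (hD : D ≤ Dmax - 1) : (D : ℝ) * (D + 1) / 4 * (Wmax ^ 2 * Pimax) ≤ C := by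
    have := mul_le_mul_of_nonneg_right (depth_factor_le hD hDmax)
      (by positivity : 0 ≤ Wmax ^ 2 * Pimax)
    rw [hC_def]
    linarith
  have htree (t : Fin T) : SmoothBounds (treeOutput (w t) (b t) (leaf t)) Pimax A C :=
    (smoothBounds_treeOutput (w t) (b t) (leaf t) (hW t) (hPi t)).mono le_rfl
      (by rw [hA]; gcongr; exact hdepth t) (hC _ (hdepth t))
  have hC0 : 0 ≤ C := le_trans (by positivity) (hC 0 (Nat.zero_le _))
  have hsrf := SmoothBounds.average htree hPimax0 (by positivity) hC0
  rw [Fintype.card_fin] at hsrf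
  exact ⟨hsrf.contDiff_one, hsrf.norm_fderiv_sub_le⟩
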